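/- Lower semicontinuity of the bending energy under H¹ convergence: Let v and vₙ (n ∈ ℕ) be twice continuously differentiable 1-periodic functions ℝ → ℝ with ∫₀¹ (vₙ(x) − v(x))² dx → 0 and ∫₀¹ (vₙ'(x) − v'(x))² dx → 0 as n → ∞. Then ∫₀¹ v''(x)²/(1 + v'(x)²)^{5/2} dx ≤ liminf_{n→∞} ∫₀¹ vₙ''(x)²/(1 + vₙ'(x)²)^{5/2} dx. -/

import Mathlib

open MeasureTheory Filter Topology Set

/-!
With `G p = ∫₀ᵖ (1 + t²)^(-5/4) dt`, the bending energy of `u` is the Dirichlet energy `∫ φ'²` of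
the periodic function `φ = G ∘ u'`. Since `G` is 1-Lipschitz, H¹ convergence `uₙ → u` gives
`φₙ → φ` in L¹. The Dirichlet energy is the supremum over periodic C¹ functions `q` of
`2 ∫ q φ' - ∫ q² = -2 ∫ q' φ - ∫ q²`, a supremum of L¹-continuous functionals of `φ`, hence it is
lower semicontinuous.
-/

lemma sq_integral_le_integral_sq {Ω : Type*} [MeasurableSpace Ω] {μ : Measure Ω}
    [IsProbabilityMeasure μ] {f : Ω → ℝ} (hf : MemLp f 2 μ) :
    (∫ x, f x ∂μ) ^ 2 ≤ ∫ x, f x ^ 2 ∂μ := by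
  have := ProbabilityTheory.variance_nonneg f μ
  rw [ProbabilityTheory.variance_eq_sub hf] at this
  simpa [sub_nonneg] using this

lemma intervalIntegral_abs_le_sqrt_integral_sq {h : ℝ → ℝ} (hh : Continuous h) :
    ∫ x in (0 : ℝ)..1, |h x| ≤ √(∫ x in (0 : ℝ)..1, h x ^ 2) := by
  have : IsProbabilityMeasure (volume.restrict (Ioc (0 : ℝ) 1)) := ⟨by simp⟩
  have h2 : MemLp (fun x => |h x|) 2 (volume.restrict (Ioc (0 : ℝ) 1)) :=
    (memLp_two_iff_integrable_sq hh.abs.aestronglyMeasurable).2 <|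
      ((hh.abs.pow 2).integrableOn_Icc).mono_set Ioc_subset_Icc_self
  simp only [intervalIntegral.integral_of_le zero_le_one]
  refine Real.le_sqrt_of_sq_le ?_
  simpa using sq_integral_le_integral_sq h2

lemma tendsto_integral_abs_of_tendsto_integral_sq {h : ℕ → ℝ → ℝ} (hh : ∀ n, Continuous (h n))
    (h0 : Tendsto (fun n => ∫ x in (0 : ℝ)..1, h n x ^ 2) atTop (𝓝 0)) :
    Tendsto (fun n => ∫ x in (0 : ℝ)..1, |h n x|) atTop (𝓝 0) := by
  refine squeeze_zero (fun n => ?_) (fun n => intervalIntegral_abs_le_sqrt_integral_sq (hh n)) ?_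
  · exact intervalIntegral.integral_nonneg zero_le_one fun x _ => abs_nonneg _
  · simpa using h0.sqrt

lemma Function.Periodic.deriv {f : ℝ → ℝ} {c : ℝ} (hf : Function.Periodic f c) :
    Function.Periodic (deriv f) c := fun x => by
  rw [← deriv_comp_add_const, hf.funext]

noncomputable def bendingPotential (p : ℝ) : ℝ :=
  ∫ t in (0 : ℝ)..p, (1 + t ^ 2) ^ (-(5 : ℝ) / 4)

lemma continuous_one_add_sq_rpow (s : ℝ) : Continuous fun t : ℝ => (1 + t ^ 2) ^ s :=
  (by fun_prop : Continuous fun t : ℝ => 1 + t ^ 2).rpow_const fun t => Or.inl (by positivity)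

lemma hasDerivAt_bendingPotential (p : ℝ) :
    HasDerivAt bendingPotential ((1 + p ^ 2) ^ (-(5 : ℝ) / 4)) p :=
  (continuous_one_add_sq_rpow _).integral_hasStrictDerivAt 0 p |>.hasDerivAt

lemma deriv_bendingPotential : deriv bendingPotential = fun p => (1 + p ^ 2) ^ (-(5 : ℝ) / 4) :=
  funext fun p => (hasDerivAt_bendingPotential p).deriv

lemma contDiff_bendingPotential : ContDiff ℝ 1 bendingPotential :=
  contDiff_one_iff_deriv.2 ⟨fun p => (hasDerivAt_bendingPotential p).differentiableAt,
    deriv_bendingPotential ▸ continuous_one_add_sq_rpow _⟩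

lemma lipschitzWith_bendingPotential : LipschitzWith 1 bendingPotential := by
  refine lipschitzWith_of_nnnorm_deriv_le
    (fun p => (hasDerivAt_bendingPotential p).differentiableAt) fun p => ?_
  rw [← NNReal.coe_le_coe, coe_nnnorm, deriv_bendingPotential, Real.norm_eq_abs,
    abs_of_nonneg (by positivity)]
  exact Real.rpow_le_one_of_one_le_of_nonpos (by nlinarith [sq_nonneg p]) (by norm_num)

lemma deriv_bendingPotential_comp_sq {f : ℝ → ℝ} {x : ℝ} (hf : DifferentiableAt ℝ f x) :
    deriv (bendingPotential ∘ f) x ^ 2 =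
      deriv f x ^ 2 / (1 + f x ^ 2) ^ ((5 : ℝ) / 2) := by
  have hpos : (0 : ℝ) < 1 + f x ^ 2 := by positivity
  rw [((hasDerivAt_bendingPotential _).comp x hf.hasDerivAt).deriv, mul_pow,
    ← Real.rpow_natCast _ 2, ← Real.rpow_mul hpos.le,
    show -(5 : ℝ) / 4 * (2 : ℕ) = -(5 / 2) by norm_num, Real.rpow_neg hpos.le]
  ring

section IntervalIntegral

variable {a b : ℝ}

lemma integral_mul_deriv_eq_neg_of_eq {u f : ℝ → ℝ} (hu : ContDiff ℝ 1 u) (hf : ContDiff ℝ 1 f)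
    (hu_ab : u b = u a) (hf_ab : f b = f a) :
    ∫ x in a..b, u x * deriv f x = -∫ x in a..b, deriv u x * f x := by
  rw [intervalIntegral.integral_mul_deriv_eq_deriv_mul
    (fun x _ => (hu.differentiable one_ne_zero x).hasDerivAt)
    (fun x _ => (hf.differentiable one_ne_zero x).hasDerivAt)
    (hu.continuous_deriv_one.intervalIntegrable _ _)
    (hf.continuous_deriv_one.intervalIntegrable _ _), hu_ab, hf_ab, sub_self, zero_sub]

lemma tendsto_integral_mul_of_tendsto_integral_abs_sub (hab : a ≤ b) {ψ φ : ℝ → ℝ}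
    {φn : ℕ → ℝ → ℝ} (hψ : Continuous ψ) (hφ : Continuous φ) (hφn : ∀ n, Continuous (φn n))
    (h : Tendsto (fun n => ∫ x in a..b, |φn n x - φ x|) atTop (𝓝 0)) :
    Tendsto (fun n => ∫ x in a..b, ψ x * φn n x) atTop (𝓝 (∫ x in a..b, ψ x * φ x)) := by
  obtain ⟨M, hM⟩ := isCompact_Icc.exists_bound_of_continuousOn (hψ.continuousOn (s := Icc a b))
  rw [tendsto_iff_norm_sub_tendsto_zero]
  refine squeeze_zero (fun n => norm_nonneg _) (fun n => ?_) (by simpa using h.const_mul M)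
  have hψφn : Continuous fun x => ψ x * φn n x := by fun_prop
  have hψφ : Continuous fun x => ψ x * φ x := by fun_prop
  rw [← intervalIntegral.integral_sub (hψφn.intervalIntegrable a b) (hψφ.intervalIntegrable a b),
    ← intervalIntegral.integral_const_mul]
  refine intervalIntegral.norm_integral_le_of_norm_le hab (Eventually.of_forall fun x hx => ?_)
    (((hφn n).sub hφ).abs.const_mul M |>.intervalIntegrable _ _)
  rw [← mul_sub, norm_mul, Real.norm_eq_abs (φn n x - φ x)]
  exact mul_le_mul_of_nonneg_right (hM x (Ioc_subset_Icc_self hx)) (abs_nonneg _)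

lemma LipschitzWith.tendsto_integral_abs_sub_comp (hab : a ≤ b) {g : ℝ → ℝ} {K : NNReal}
    (hg : LipschitzWith K g) {f : ℝ → ℝ} {fn : ℕ → ℝ → ℝ} (hf : Continuous f)
    (hfn : ∀ n, Continuous (fn n))
    (h : Tendsto (fun n => ∫ x in a..b, |fn n x - f x|) atTop (𝓝 0)) :
    Tendsto (fun n => ∫ x in a..b, |g (fn n x) - g (f x)|) atTop (𝓝 0) := by
  refine squeeze_zero (fun n => intervalIntegral.integral_nonneg hab fun x _ => abs_nonneg _)
    (fun n => ?_) (by simpa using h.const_mul (K : ℝ))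
  rw [← intervalIntegral.integral_const_mul]
  refine intervalIntegral.integral_mono_on hab
    ((hg.continuous.comp (hfn n)).sub (hg.continuous.comp hf) |>.abs.intervalIntegrable _ _)
    (((hfn n).sub hf).abs.const_mul _ |>.intervalIntegrable _ _) fun x _ => ?_
  simpa only [← Real.dist_eq] using hg.dist_le_mul (fn n x) (f x)

lemma integral_sq_eq_two_mul_integral_mul_sub {g q : ℝ → ℝ} (hg : Continuous g)
    (hq : Continuous q) :
    ∫ x in a..b, g x ^ 2 =
      2 * (∫ x in a..b, q x * g x) - (∫ x in a..b, q x ^ 2) + ∫ x in a..b, (g x - q x) ^ 2 := by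
  have hqg : Continuous fun x => 2 * (q x * g x) := by fun_prop
  have hq2 : Continuous fun x => q x ^ 2 := by fun_prop
  have hlow : Continuous fun x => 2 * (q x * g x) - q x ^ 2 := by fun_prop
  have hgap : Continuous fun x => (g x - q x) ^ 2 := by fun_prop
  rw [← intervalIntegral.integral_const_mul,
    ← intervalIntegral.integral_sub (hqg.intervalIntegrable a b) (hq2.intervalIntegrable a b),
    ← intervalIntegral.integral_add (hlow.intervalIntegrable a b) (hgap.intervalIntegrable a b)]
  congr 1 with x
  ring

end IntervalIntegral

lemma exists_contDiff_near_of_continuousOn_of_eq {g : ℝ → ℝ} (hg : ContinuousOn g (Icc 0 1))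
    (hg01 : g 1 = g 0) {δ : ℝ} (hδ : 0 < δ) :
    ∃ q : ℝ → ℝ, ContDiff ℝ 1 q ∧ q 1 = q 0 ∧ ∀ x ∈ Icc (0 : ℝ) 1, |q x - g x| ≤ δ := by
  obtain ⟨p, hp⟩ := exists_polynomial_near_of_continuousOn 0 1 g hg (δ / 3) (by positivity)
  -- correcting by a linear function makes the endpoint values agree, at the cost of twice the error
  refine ⟨fun x => p.eval x - (p.eval 1 - p.eval 0) * x, ?_, by ring, fun x hx => ?_⟩
  · exact (p.contDiff_aeval 1).sub (contDiff_const.mul contDiff_id)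
  have h0 := hp 0 (by simp)
  have h1 := hp 1 (by simp)
  have hpx := hp x hx
  have hx1 : |x| ≤ 1 := abs_le.2 ⟨by linarith [hx.1], hx.2⟩
  calc |p.eval x - (p.eval 1 - p.eval 0) * x - g x|
      = |(p.eval x - g x) - ((p.eval 1 - g 1) - (p.eval 0 - g 0)) * x| := by rw [hg01]; ring_nf
    _ ≤ |p.eval x - g x| + (|p.eval 1 - g 1| + |p.eval 0 - g 0|) * |x| := by
        grw [abs_sub, abs_mul, abs_sub (p.eval 1 - g 1)]
    _ ≤ δ := by nlinarith [abs_nonneg x]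

lemma EReal.coe_le_liminf_of_forall_lt_exists_tendsto {α : Type*} {l : Filter α} [l.NeBot]
    {E : ℝ} {a : α → ℝ}
    (h : ∀ c < E, ∃ b : α → ℝ, ∃ L, c ≤ L ∧ Tendsto b l (𝓝 L) ∧ ∀ n, b n ≤ a n) :
    (E : EReal) ≤ liminf (fun n => (a n : EReal)) l := by
  refine le_of_forall_lt_imp_le_of_dense fun c hc => ?_
  induction c using EReal.rec with
  | bot => exact bot_le
  | top => exact absurd hc (not_lt.2 le_top)
  | coe c =>
    obtain ⟨b, L, hcL, hb, hba⟩ := h c (EReal.coe_lt_coe_iff.1 hc)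
    calc (c : EReal) ≤ L := EReal.coe_le_coe_iff.2 hcL
      _ = liminf (fun n => (b n : EReal)) l := ((EReal.tendsto_coe.2 hb).liminf_eq).symm
      _ ≤ _ := liminf_le_liminf (Eventually.of_forall fun n => EReal.coe_le_coe_iff.2 (hba n))

theorem integral_deriv_sq_le_liminf_of_tendsto_integral_abs_sub {φ : ℝ → ℝ}
    {φn : ℕ → ℝ → ℝ} (hφ : ContDiff ℝ 1 φ) (hφn : ∀ n, ContDiff ℝ 1 (φn n))
    (hφ1 : φ 1 = φ 0) (hφ'1 : deriv φ 1 = deriv φ 0) (hφn1 : ∀ n, φn n 1 = φn n 0)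
    (h : Tendsto (fun n => ∫ x in (0 : ℝ)..1, |φn n x - φ x|) atTop (𝓝 0)) :
    ((∫ x in (0 : ℝ)..1, deriv φ x ^ 2 : ℝ) : EReal) ≤
      liminf (fun n => ((∫ x in (0 : ℝ)..1, deriv (φn n) x ^ 2 : ℝ) : EReal)) atTop := by
  have hφ' := hφ.continuous_deriv_one
  refine EReal.coe_le_liminf_of_forall_lt_exists_tendsto fun c hc => ?_
  obtain ⟨q, hq, hq1, hq_near⟩ := exists_contDiff_near_of_continuousOn_of_eq
    hφ'.continuousOn hφ'1 (Real.sqrt_pos.2 (sub_pos.2 hc))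
  have hq' := hq.continuous
  -- `2 ∫ q ψ' - ∫ q²` minorizes `∫ ψ'²`, and `∫ q ψ' = -∫ q' ψ` is L¹-continuous in `ψ`
  refine ⟨fun n => 2 * (∫ x in (0 : ℝ)..1, q x * deriv (φn n) x) - ∫ x in (0 : ℝ)..1, q x ^ 2,
    2 * (∫ x in (0 : ℝ)..1, q x * deriv φ x) - ∫ x in (0 : ℝ)..1, q x ^ 2, ?_, ?_, fun n => ?_⟩
  · have hgap : ∫ x in (0 : ℝ)..1, (deriv φ x - q x) ^ 2 ≤
        ∫ _ in (0 : ℝ)..1, ((∫ x in (0 : ℝ)..1, deriv φ x ^ 2) - c) := by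
      refine intervalIntegral.integral_mono_on zero_le_one
        ((by fun_prop : Continuous fun x => (deriv φ x - q x) ^ 2).intervalIntegrable 0 1)
        intervalIntegrable_const fun x hx => ?_
      rw [← sq_abs, abs_sub_comm, ← Real.sq_sqrt (sub_pos.2 hc).le]
      exact pow_le_pow_left₀ (abs_nonneg _) (hq_near x hx) 2
    rw [intervalIntegral.integral_const, sub_zero, one_smul] at hgap
    linarith [integral_sq_eq_two_mul_integral_mul_sub (a := 0) (b := 1) hφ' hq']
  · simp only [integral_mul_deriv_eq_neg_of_eq hq (hφn _) hq1 (hφn1 _),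
      integral_mul_deriv_eq_neg_of_eq hq hφ hq1 hφ1]
    exact ((tendsto_integral_mul_of_tendsto_integral_abs_sub zero_le_one hq.continuous_deriv_one
      hφ.continuous (fun n => (hφn n).continuous) h).neg.const_mul 2).sub_const _
  · have hgap := intervalIntegral.integral_nonneg (μ := volume) zero_le_one
      fun x _ => sq_nonneg (deriv (φn n) x - q x)
    linarith [integral_sq_eq_two_mul_integral_mul_sub (a := 0) (b := 1)
      (hφn n).continuous_deriv_one hq']

theorem stmt10_general (v : ℝ → ℝ) (vn : ℕ → ℝ → ℝ)
    (hv : ContDiff ℝ 2 v) (hvn : ∀ n, ContDiff ℝ 2 (vn n))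
    (hper : ∀ x, v (x + 1) = v x) (hvnper : ∀ n x, vn n (x + 1) = vn n x)
    (hL2' : Tendsto (fun n => ∫ x in Set.Ioo (0 : ℝ) 1, (deriv (vn n) x - deriv v x) ^ 2)
      atTop (nhds 0)) :
    ((∫ x in Set.Ioo (0 : ℝ) 1,
        deriv (deriv v) x ^ 2 / (1 + deriv v x ^ 2) ^ ((5 : ℝ) / 2) : ℝ) : EReal) ≤
      liminf (fun n => ((∫ x in Set.Ioo (0 : ℝ) 1,
        deriv (deriv (vn n)) x ^ 2 / (1 + deriv (vn n) x ^ 2) ^ ((5 : ℝ) / 2) : ℝ) : EReal))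
        atTop := by
  have hIoo : ∀ f : ℝ → ℝ, ∫ x in Ioo (0 : ℝ) 1, f x = ∫ x in (0 : ℝ)..1, f x := fun f => by
    rw [intervalIntegral.integral_of_le zero_le_one, integral_Ioc_eq_integral_Ioo]
  have hC1 : ∀ {u : ℝ → ℝ}, ContDiff ℝ 2 u → ContDiff ℝ 1 (deriv u) := fun hu => hu.deriv'
  have henergy : ∀ {u : ℝ → ℝ}, ContDiff ℝ 2 u →
      ∫ x in Ioo (0 : ℝ) 1, deriv (deriv u) x ^ 2 / (1 + deriv u x ^ 2) ^ ((5 : ℝ) / 2) =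
        ∫ x in (0 : ℝ)..1, deriv (bendingPotential ∘ deriv u) x ^ 2 := fun hu => by
    simp only [hIoo, deriv_bendingPotential_comp_sq ((hC1 hu).differentiable one_ne_zero _)]
  have hφper : ∀ {u : ℝ → ℝ}, Function.Periodic u 1 →
      Function.Periodic (bendingPotential ∘ deriv u) 1 := fun hu => hu.deriv.comp _
  simp only [henergy hv, henergy (hvn _)]
  refine integral_deriv_sq_le_liminf_of_tendsto_integral_abs_sub
    (contDiff_bendingPotential.comp (hC1 hv))
    (fun n => contDiff_bendingPotential.comp (hC1 (hvn n)))
    (by simpa using hφper hper 0) (by simpa using (hφper hper).deriv 0)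
    (fun n => by simpa using hφper (hvnper n) 0) ?_
  refine lipschitzWith_bendingPotential.tendsto_integral_abs_sub_comp zero_le_one
    (hC1 hv).continuous (fun n => (hC1 (hvn n)).continuous) ?_
  exact tendsto_integral_abs_of_tendsto_integral_sq
    (fun n => (hC1 (hvn n)).continuous.sub (hC1 hv).continuous) (by simpa only [hIoo] using hL2')

/-- Lower semicontinuity of the bending energy under H¹ convergence. -/
theorem stmt10 (v : ℝ → ℝ) (vn : ℕ → ℝ → ℝ)
    (hv : ContDiff ℝ 2 v) (hvn : ∀ n, ContDiff ℝ 2 (vn n))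
    (hper : ∀ x, v (x + 1) = v x) (hvnper : ∀ n x, vn n (x + 1) = vn n x)
    (hL2 : Tendsto (fun n => ∫ x in Set.Ioo (0 : ℝ) 1, (vn n x - v x) ^ 2) atTop (nhds 0))
    (hL2' : Tendsto (fun n => ∫ x in Set.Ioo (0 : ℝ) 1, (deriv (vn n) x - deriv v x) ^ 2)
      atTop (nhds 0)) :
    ((∫ x in Set.Ioo (0 : ℝ) 1,
        deriv (deriv v) x ^ 2 / (1 + deriv v x ^ 2) ^ ((5 : ℝ) / 2) : ℝ) : EReal) ≤
      liminf (fun n => ((∫ x in Set.Ioo (0 : ℝ) 1,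
        deriv (deriv (vn n)) x ^ 2 / (1 + deriv (vn n) x ^ 2) ^ ((5 : ℝ) / 2) : ℝ) : EReal))
        atTop :=
  stmt10_general v vn hv hvn hper hvnper hL2'
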